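/- For any integers n and p with n ≥ 3 and ⌈(n+1)/2⌉ ≤ p ≤ ⌊6n/7⌋, there exists a tree T of order n with γ_{StR}(T) = p. -/

import Mathlib

/-!
The extremal tree is a hub carrying `A` pendant leaves, `B` pendant paths of length two and `t`
spiders `S(2,2,2)` attached at their centres; it has order `1 + A + 2B + 7t`. A pendant leaf
(resp. path) has total weight at least `1` (resp. `2`) unless its vertex next to the centre is a
zero that only the centre can defend, and a centre defending `K` zeros has weight at least
`1 + ⌈K/2⌉`. Summing, `γ_StR ≥ 1 + B + ⌈(A + B)/2⌉ + 6t` as soon as `A + B ≥ 2`, and the weights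
`1 + ⌈(A + B)/2⌉` on the hub, `3` on spider centres and `1` on path ends attain it. Both the order
and this value can be prescribed by choosing `A`, `B`, `t`.
-/

namespace SimpleGraph

variable {V : Type*}

/-- The degree of a vertex (cardinality of its open neighborhood). -/
noncomputable def deg (G : SimpleGraph V) (v : V) : ℕ := (G.neighborSet v).ncard

/-- Maximum degree. -/
noncomputable def maxDeg [Fintype V] (G : SimpleGraph V) : ℕ :=
  Finset.univ.sup fun v => G.deg v

/-- A strong Roman dominating function: `f : V → {0,1,...,⌈Δ/2⌉+1}` such that every vertex
with value 0 has a neighbor `w` with `f w ≥ 2` and `f w ≥ 1 + ⌈|N(w) ∩ B₀|/2⌉`. -/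
def IsStRDF [Fintype V] (G : SimpleGraph V) (f : V → ℕ) : Prop :=
  (∀ v, f v ≤ (G.maxDeg + 1) / 2 + 1) ∧
  ∀ v, f v = 0 → ∃ w, G.Adj v w ∧ 2 ≤ f w ∧
    1 + ((G.neighborSet w ∩ {u | f u = 0}).ncard + 1) / 2 ≤ f w

/-- The strong Roman domination number. -/
noncomputable def gammaStR [Fintype V] (G : SimpleGraph V) : ℕ :=
  sInf {k | ∃ f, G.IsStRDF f ∧ ∑ v, f v = k}

/-- A Roman dominating function. -/
def IsRDF (G : SimpleGraph V) (f : V → ℕ) : Prop :=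
  (∀ v, f v ≤ 2) ∧ ∀ v, f v = 0 → ∃ w, G.Adj v w ∧ f w = 2

/-- The Roman domination number. -/
noncomputable def gammaR [Fintype V] (G : SimpleGraph V) : ℕ :=
  sInf {k | ∃ f, G.IsRDF f ∧ ∑ v, f v = k}

/-- A dominating set. -/
def IsDomSet (G : SimpleGraph V) (D : Set V) : Prop :=
  ∀ v ∉ D, ∃ w ∈ D, G.Adj v w

/-- The domination number. -/
noncomputable def gammaDom [Fintype V] (G : SimpleGraph V) : ℕ :=
  sInf {k | ∃ D : Set V, G.IsDomSet D ∧ D.ncard = k}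

end SimpleGraph

lemma Set.ncard_le_of_subset_range {α ι : Type*} [Finite ι] {s : Set α} {x : ι → α}
    (hs : s ⊆ Set.range x) : s.ncard ≤ Nat.card ι :=
  (Set.ncard_le_ncard hs (Set.finite_range x)).trans (Finite.card_range_le x)

namespace SimpleGraph

section ParentGraph

variable {V : Type*}

def parentGraph (par : V → V) (root : V) : SimpleGraph V :=
  fromRel fun v w => v ≠ root ∧ w = par v

variable {par : V → V} {root : V} {rank : V → ℕ}

lemma parentGraph_adj (hrank : ∀ v, v ≠ root → rank (par v) < rank v) {v w : V} :
    (parentGraph par root).Adj v w ↔ (v ≠ root ∧ w = par v) ∨ (w ≠ root ∧ v = par w) := by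
  refine (fromRel_adj _ v w).trans ⟨And.right, fun h => ⟨?_, h⟩⟩
  rintro rfl
  rcases h with ⟨hv, h⟩ | ⟨hv, h⟩ <;> exact (hrank v hv).ne (by rw [← h])

lemma parentGraph_reachable_root (hrank : ∀ v, v ≠ root → rank (par v) < rank v) (v : V) :
    (parentGraph par root).Reachable v root := by
  induction h : rank v using Nat.strong_induction_on generalizing v with
  | _ n ih =>
    by_cases hv : v = root
    · rw [hv]
    · exact ((parentGraph_adj hrank).2 (Or.inl ⟨hv, rfl⟩)).reachable.trans
        (ih _ (h ▸ hrank v hv) _ rfl)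

lemma rank_iterate_le (hrank : ∀ v, v ≠ root → rank (par v) < rank v)
    (hroot : par root = root) (k : ℕ) (v : V) : rank (par^[k] v) ≤ rank v := by
  induction k generalizing v with
  | zero => rfl
  | succ k ih =>
    rw [Function.iterate_succ_apply]
    refine (ih (par v)).trans ?_
    by_cases hv : v = root
    · rw [hv, hroot]
    · exact (hrank v hv).le

/-- Removing the edge from `v` to its parent separates the descendants of `v`
(the `u` with `par^[k] u = v`) from `par v`. -/
lemma not_reachable_par_of_deleteEdge (hrank : ∀ v, v ≠ root → rank (par v) < rank v)
    (hroot : par root = root) {v : V} (hv : v ≠ root) :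
    ¬ (parentGraph par root \ fromEdgeSet {s(v, par v)}).Reachable v (par v) := by
  rintro ⟨p⟩
  have hpar : par v ∉ {u | ∃ k, par^[k] u = v} := by
    rintro ⟨k, hk⟩
    have := rank_iterate_le hrank hroot k (par v)
    rw [hk] at this
    exact (hrank v hv).not_ge this
  obtain ⟨d, -, ⟨k, hk⟩, hout⟩ := p.exists_boundary_dart {u | ∃ k, par^[k] u = v} ⟨0, rfl⟩ hpar
  have hadj := d.adj
  rw [sdiff_adj, fromEdgeSet_adj, parentGraph_adj hrank] at hadj
  obtain ⟨(⟨-, hsnd⟩ | ⟨-, hfst⟩), hnot⟩ := hadj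
  · cases k with
    | zero =>
      rw [Function.iterate_zero_apply] at hk
      exact hnot ⟨by rw [hsnd, hk]; rfl, d.adj.ne⟩
    | succ k => exact hout ⟨k, by rwa [hsnd, ← Function.iterate_succ_apply]⟩
  · exact hout ⟨k + 1, by rwa [Function.iterate_succ_apply, ← hfst]⟩

lemma isTree_parentGraph (hrank : ∀ v, v ≠ root → rank (par v) < rank v)
    (hroot : par root = root) : (parentGraph par root).IsTree := by
  have : Nonempty V := ⟨root⟩
  refine ⟨⟨fun u v => (parentGraph_reachable_root hrank u).trans
    (parentGraph_reachable_root hrank v).symm⟩, isAcyclic_iff_forall_adj_isBridge.2 ?_⟩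
  intro u v huv
  rw [isBridge_iff]
  rcases (parentGraph_adj hrank).1 huv with ⟨hu, rfl⟩ | ⟨hv, rfl⟩
  · exact not_reachable_par_of_deleteEdge hrank hroot hu
  · rw [Sym2.eq_swap]
    exact fun h => not_reachable_par_of_deleteEdge hrank hroot hv h.symm

end ParentGraph

section StrongRoman

variable {V : Type*} {G : SimpleGraph V} {f : V → ℕ}

/-- A leg of `c` attached at `x` with weight `W` and requirement `r`: the weight falls short of
`r` by at most one, and only when `x` is a zero vertex that `c` must defend. -/
def IsLeg (G : SimpleGraph V) (f : V → ℕ) (c x : V) (W r : ℕ) : Prop :=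
  r ≤ W + 1 ∧ (W < r → f x = 0 ∧ 1 + ((G.neighborSet c ∩ {u | f u = 0}).ncard + 1) / 2 ≤ f c)

lemma IsStRDF.isLeg_of_leaf [Fintype V] (hf : G.IsStRDF f) {c u : V}
    (hu : ∀ w, G.Adj u w → w = c) : G.IsLeg f c u (f u) 1 := by
  refine ⟨by omega, fun hlt => ?_⟩
  have hu0 : f u = 0 := by omega
  obtain ⟨w, hw, -, hdef⟩ := hf.2 u hu0
  exact ⟨hu0, hu w hw ▸ hdef⟩

lemma IsStRDF.isLeg_of_pendantPath [Fintype V] (hf : G.IsStRDF f) {c m l : V}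
    (hl : ∀ w, G.Adj l w → w = m) (hm : ∀ w, G.Adj m w → w = c ∨ w = l) :
    G.IsLeg f c m (f m + f l) 2 := by
  by_cases hl0 : f l = 0
  · obtain ⟨w, hw, h2, -⟩ := hf.2 l hl0
    rw [hl w hw] at h2
    exact ⟨by omega, by omega⟩
  refine ⟨by omega, fun hlt => ?_⟩
  have hm0 : f m = 0 := by omega
  obtain ⟨w, hw, h2, hdef⟩ := hf.2 m hm0
  rcases hm w hw with rfl | rfl
  · exact ⟨hm0, hdef⟩
  · omega

/-- Either no leg falls short, or the `K` short legs force `f c ≥ 1 + ⌈K / 2⌉`, and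
`1 + ⌈K / 2⌉ - K` decreases with `K`. -/
lemma IsLeg.le_add_sum [Finite V] {ι : Type*} [Fintype ι] {c : V} {x : ι → V}
    (hx : Function.Injective x) (hxc : ∀ i, G.Adj c (x i)) {W r : ι → ℕ}
    (hleg : ∀ i, G.IsLeg f c (x i) (W i) (r i)) :
    min (∑ i, r i) (∑ i, r i + 1 + (Fintype.card ι + 1) / 2 - Fintype.card ι) ≤
      f c + ∑ i, W i := by
  classical
  set S := Finset.univ.filter fun i => W i < r i
  have hshort : ∑ i, r i ≤ ∑ i, W i + S.card := by
    rw [Finset.card_filter, ← Finset.sum_add_distrib]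
    refine Finset.sum_le_sum fun i _ => ?_
    have := (hleg i).1
    split_ifs <;> omega
  have hSk : S.card ≤ Fintype.card ι := Finset.card_filter_le _ _
  rcases S.eq_empty_or_nonempty with hS | ⟨i, hi⟩
  · rw [hS, Finset.card_empty] at hshort
    omega
  have hc := ((hleg i).2 (Finset.mem_filter.1 hi).2).2
  have hcount : S.card ≤ (G.neighborSet c ∩ {u | f u = 0}).ncard := by
    rw [← Set.ncard_coe_finset, ← Set.ncard_image_of_injective _ hx]
    refine Set.ncard_le_ncard ?_
    rintro _ ⟨j, hj, rfl⟩
    exact ⟨hxc j, ((hleg j).2 (Finset.mem_filter.1 hj).2).1⟩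
  omega

lemma card_le_deg_of_injective [Finite V] {ι : Type*} [Fintype ι] {c : V} {x : ι → V}
    (hx : Function.Injective x) (hxc : ∀ i, G.Adj c (x i)) : Fintype.card ι ≤ G.deg c := by
  rw [← Nat.card_eq_fintype_card, ← Set.ncard_univ, ← Set.ncard_image_of_injective _ hx]
  exact Set.ncard_le_ncard (by rintro _ ⟨i, -, rfl⟩; exact hxc i)

lemma deg_le_maxDeg [Fintype V] (v : V) : G.deg v ≤ G.maxDeg :=
  Finset.le_sup (f := G.deg) (Finset.mem_univ v)

lemma gammaStR_eq [Fintype V] (hf : G.IsStRDF f)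
    (hmin : ∀ g, G.IsStRDF g → ∑ v, f v ≤ ∑ v, g v) : G.gammaStR = ∑ v, f v :=
  le_antisymm (Nat.sInf_le ⟨f, hf, rfl⟩)
    (le_csInf ⟨_, f, hf, rfl⟩ fun _ ⟨g, hg, hsum⟩ => hsum ▸ hmin g hg)

end StrongRoman

end SimpleGraph

namespace StrongRomanTree

open SimpleGraph

variable {A B t : ℕ}

variable (A B t) in
abbrev Vertex := Unit ⊕ Fin A ⊕ Fin B ⊕ Fin B ⊕ Fin t ⊕ (Fin t × Fin 3) ⊕ (Fin t × Fin 3)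

abbrev hub : Vertex A B t := .inl ()
abbrev leaf (a : Fin A) : Vertex A B t := .inr (.inl a)
abbrev mid (b : Fin B) : Vertex A B t := .inr (.inr (.inl b))
abbrev tip (b : Fin B) : Vertex A B t := .inr (.inr (.inr (.inl b)))
abbrev spider (g : Fin t) : Vertex A B t := .inr (.inr (.inr (.inr (.inl g))))
abbrev knee (g : Fin t) (i : Fin 3) : Vertex A B t :=
  .inr (.inr (.inr (.inr (.inr (.inl (g, i))))))
abbrev foot (g : Fin t) (i : Fin 3) : Vertex A B t :=
  .inr (.inr (.inr (.inr (.inr (.inr (g, i))))))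
abbrev hubLeg : Fin A ⊕ Fin B → Vertex A B t := Sum.elim leaf mid

def par : Vertex A B t → Vertex A B t
  | .inr (.inr (.inr (.inl b))) => mid b
  | .inr (.inr (.inr (.inr (.inr (.inl (g, _)))))) => spider g
  | .inr (.inr (.inr (.inr (.inr (.inr (g, i)))))) => knee g i
  | _ => hub

def depth : Vertex A B t → ℕ
  | .inl _ => 0
  | .inr (.inr (.inr (.inl _))) => 2
  | .inr (.inr (.inr (.inr (.inr (.inl _))))) => 2
  | .inr (.inr (.inr (.inr (.inr (.inr _))))) => 3
  | _ => 1

lemma depth_par_lt : ∀ v : Vertex A B t, v ≠ hub → depth (par v) < depth v := by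
  rintro (_ | _ | _ | _ | _ | _ | _) hv <;> simp_all [par, depth]

variable (A B t) in
def tree : SimpleGraph (Vertex A B t) := parentGraph par hub

lemma tree_adj {v w : Vertex A B t} :
    (tree A B t).Adj v w ↔ (v ≠ hub ∧ w = par v) ∨ (w ≠ hub ∧ v = par w) :=
  parentGraph_adj depth_par_lt

lemma isTree_tree : (tree A B t).IsTree := isTree_parentGraph depth_par_lt rfl

lemma card_vertex : Fintype.card (Vertex A B t) = 1 + A + 2 * B + 7 * t := by
  simp only [Fintype.card_sum, Fintype.card_prod, Fintype.card_unit, Fintype.card_fin]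
  ring

lemma eq_hub_of_adj_leaf {a : Fin A} {w : Vertex A B t} (h : (tree A B t).Adj (leaf a) w) :
    w = hub := by
  rw [tree_adj] at h
  rcases w with _ | _ | _ | _ | _ | _ | _ <;> simp_all [par]

lemma eq_mid_of_adj_tip {b : Fin B} {w : Vertex A B t} (h : (tree A B t).Adj (tip b) w) :
    w = mid b := by
  rw [tree_adj] at h
  rcases w with _ | _ | _ | _ | _ | _ | _ <;> simp_all [par]

lemma eq_hub_or_eq_tip_of_adj_mid {b : Fin B} {w : Vertex A B t}
    (h : (tree A B t).Adj (mid b) w) : w = hub ∨ w = tip b := by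
  rw [tree_adj] at h
  rcases w with _ | _ | _ | _ | _ | _ | _ <;> simp_all [par]

lemma eq_knee_of_adj_foot {g : Fin t} {i : Fin 3} {w : Vertex A B t}
    (h : (tree A B t).Adj (foot g i) w) : w = knee g i := by
  rw [tree_adj] at h
  rcases w with _ | _ | _ | _ | _ | _ | _ <;> simp_all [par]

lemma eq_spider_or_eq_foot_of_adj_knee {g : Fin t} {i : Fin 3} {w : Vertex A B t}
    (h : (tree A B t).Adj (knee g i) w) : w = spider g ∨ w = foot g i := by
  rw [tree_adj] at h
  rcases w with _ | _ | _ | _ | _ | _ | _ <;> simp [par] at h ⊢ <;> simp [h]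

lemma sum_vertex (f : Vertex A B t → ℕ) : ∑ v, f v =
    (f hub + ∑ a, f (leaf a) + ∑ b, (f (mid b) + f (tip b))) +
      ∑ g, (f (spider g) + ∑ i, (f (knee g i) + f (foot g i))) := by
  simp only [Fintype.sum_sum_type, Fintype.sum_prod_type, Finset.sum_add_distrib,
    Finset.univ_unique, Finset.sum_singleton]
  ring

lemma hubLeg_injective : Function.Injective (hubLeg : Fin A ⊕ Fin B → Vertex A B t) := by
  rintro (_ | _) (_ | _) h <;> simp at h <;> rw [h]

lemma knee_injective (g : Fin t) : Function.Injective (knee g : Fin 3 → Vertex A B t) := by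
  intro i j h
  simpa using h

lemma hub_adj_hubLeg (i : Fin A ⊕ Fin B) :
    (tree A B t).Adj hub (hubLeg i) := by
  rw [tree_adj]
  rcases i with _ | _ <;> simp [par]

lemma spider_adj_knee (g : Fin t) (i : Fin 3) : (tree A B t).Adj (spider g) (knee g i) := by
  rw [tree_adj]
  simp [par]

variable {f : Vertex A B t → ℕ}

lemma hub_le_add_sum (hf : (tree A B t).IsStRDF f) (hAB : 2 ≤ A + B) :
    1 + B + (A + B + 1) / 2 ≤ f hub + ∑ a, f (leaf a) + ∑ b, (f (mid b) + f (tip b)) := by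
  have hlegs : ∀ i, (tree A B t).IsLeg f hub (hubLeg i)
      (i.elim (fun a => f (leaf a)) fun b => f (mid b) + f (tip b))
      (i.elim (fun _ => 1) fun _ => 2)
    | .inl _ => hf.isLeg_of_leaf fun _ => eq_hub_of_adj_leaf
    | .inr _ =>
      hf.isLeg_of_pendantPath (fun _ => eq_mid_of_adj_tip) fun _ => eq_hub_or_eq_tip_of_adj_mid
  have := IsLeg.le_add_sum hubLeg_injective hub_adj_hubLeg hlegs
  simp only [Fintype.sum_sum_type, Sum.elim_inl, Sum.elim_inr, Fintype.card_sum,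
    Fintype.card_fin, Finset.sum_const, Finset.card_univ, smul_eq_mul] at this
  omega

lemma spider_le_add_sum (hf : (tree A B t).IsStRDF f) (g : Fin t) :
    6 ≤ f (spider g) + ∑ i, (f (knee g i) + f (foot g i)) := by
  have := IsLeg.le_add_sum (knee_injective g) (spider_adj_knee g) (r := fun _ => 2) fun _ =>
    hf.isLeg_of_pendantPath (fun _ => eq_knee_of_adj_foot)
      fun _ => eq_spider_or_eq_foot_of_adj_knee
  simp only [Finset.sum_const, Finset.card_univ, Fintype.card_fin, smul_eq_mul] at this
  omega

lemma le_sum_of_isStRDF (hf : (tree A B t).IsStRDF f) (hAB : 2 ≤ A + B) :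
    1 + B + 6 * t + (A + B + 1) / 2 ≤ ∑ v, f v := by
  have hspiders : 6 * t ≤ ∑ g, (f (spider g) + ∑ i, (f (knee g i) + f (foot g i))) := by
    simpa [mul_comm] using
      Finset.sum_le_sum fun g (_ : g ∈ Finset.univ) => spider_le_add_sum hf g
  rw [sum_vertex]
  have := hub_le_add_sum hf hAB
  omega

variable (A B t) in
def optimalStRDF : Vertex A B t → ℕ
  | .inl _ => 1 + (A + B + 1) / 2
  | .inr (.inr (.inr (.inl _))) => 1
  | .inr (.inr (.inr (.inr (.inl _)))) => 3
  | .inr (.inr (.inr (.inr (.inr (.inr _))))) => 1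
  | _ => 0

lemma neighborSet_hub_zeros_subset :
    (tree A B t).neighborSet hub ∩ {u | optimalStRDF A B t u = 0} ⊆ Set.range hubLeg := by
  rintro w ⟨hw, hw0⟩
  rw [mem_neighborSet, tree_adj] at hw
  rcases w with _ | _ | _ | _ | _ | _ | _ <;> simp_all [par, optimalStRDF]

lemma neighborSet_spider_zeros_subset (g : Fin t) :
    (tree A B t).neighborSet (spider g) ∩ {u | optimalStRDF A B t u = 0} ⊆
      Set.range (knee g) := by
  rintro w ⟨hw, hw0⟩
  rw [mem_neighborSet, tree_adj] at hw
  rcases w with _ | _ | _ | _ | _ | ⟨g', i⟩ | _ <;> simp_all [par, optimalStRDF]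

lemma isStRDF_optimalStRDF (hAB : 2 ≤ A + B) : (tree A B t).IsStRDF (optimalStRDF A B t) := by
  have hhub : A + B ≤ (tree A B t).maxDeg := by
    simpa using
      (card_le_deg_of_injective hubLeg_injective hub_adj_hubLeg).trans (deg_le_maxDeg hub)
  have hspider (g : Fin t) : 3 ≤ (tree A B t).maxDeg := by
    simpa using (card_le_deg_of_injective (knee_injective g) (spider_adj_knee g)).trans
      (deg_le_maxDeg (spider g))
  have hhub0 :
      ((tree A B t).neighborSet hub ∩ {u | optimalStRDF A B t u = 0}).ncard ≤ A + B := by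
    simpa using Set.ncard_le_of_subset_range neighborSet_hub_zeros_subset
  have hspider0 (g : Fin t) :
      ((tree A B t).neighborSet (spider g) ∩ {u | optimalStRDF A B t u = 0}).ncard ≤ 3 := by
    simpa using Set.ncard_le_of_subset_range (neighborSet_spider_zeros_subset g)
  refine ⟨?_, ?_⟩
  · rintro (_ | _ | _ | _ | g | _ | _) <;> simp only [optimalStRDF]
    case inr.inr.inr.inr.inl => have := hspider g; omega
    all_goals omega
  · rintro (_ | a | b | _ | _ | ⟨g, i⟩ | _) h0 <;> simp [optimalStRDF] at h0
    · exact ⟨hub, (hub_adj_hubLeg (.inl a)).symm, by change 2 ≤ 1 + _; omega,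
        by change _ ≤ 1 + (A + B + 1) / 2; omega⟩
    · exact ⟨hub, (hub_adj_hubLeg (.inr b)).symm, by change 2 ≤ 1 + _; omega,
        by change _ ≤ 1 + (A + B + 1) / 2; omega⟩
    · exact ⟨spider g, (spider_adj_knee g i).symm, by change 2 ≤ 3; omega,
        by change _ ≤ 3; have := hspider0 g; omega⟩

lemma sum_optimalStRDF : ∑ v, optimalStRDF A B t v = 1 + B + 6 * t + (A + B + 1) / 2 := by
  simp [optimalStRDF, mul_comm]
  ring

lemma gammaStR_tree (hAB : 2 ≤ A + B) :
    (tree A B t).gammaStR = 1 + B + 6 * t + (A + B + 1) / 2 := by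
  rw [gammaStR_eq (isStRDF_optimalStRDF hAB) fun f hf => ?_, sum_optimalStRDF]
  exact sum_optimalStRDF.trans_le (le_sum_of_isStRDF hf hAB)

end StrongRomanTree

/-- Writing `D = 2p - n - 1`, the parameters `B = D - 5t - e` and `A = n - 1 - 2D + 3t + 2e`
with `e ∈ {0, 1}` give order `n` and value `p`, since `n - 1 - D = 2 (n - p)` is even; `t` is
chosen least with `A ≥ 0`. -/
lemma exists_tree_params {n p : ℕ} (hn : 3 ≤ n) (hp : (n + 2) / 2 ≤ p) (hp' : p ≤ 6 * n / 7) :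
    ∃ A B t : ℕ, 2 ≤ A + B ∧ 1 + A + 2 * B + 7 * t = n ∧ 1 + B + 6 * t + (A + B + 1) / 2 = p := by
  obtain ⟨D, hD⟩ : ∃ D, D = 2 * p - n - 1 := ⟨_, rfl⟩
  obtain ⟨t, ht⟩ : ∃ t, t = (2 * D + 3 - n) / 3 := ⟨_, rfl⟩
  by_cases he : 5 * t ≤ D ∧ 2 * t + D + 3 ≤ n
  · exact ⟨n - 1 + 3 * t - 2 * D, D - 5 * t, t, by omega, by omega, by omega⟩
  · obtain ⟨t', ht'⟩ : ∃ t', t' = (2 * D + 1 - n) / 3 := ⟨_, rfl⟩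
    exact ⟨n + 1 + 3 * t' - 2 * D, D - 5 * t' - 1, t', by omega, by omega, by omega⟩

/-- For any integers `n`, `p` with `n ≥ 3` and `⌈(n+1)/2⌉ ≤ p ≤ ⌊6n/7⌋`, there exists a
tree `T` of order `n` with `γ_{StR}(T) = p`. -/
theorem stmt19 (n p : ℕ) (hn : 3 ≤ n) (h1 : (n + 2) / 2 ≤ p) (h2 : p ≤ 6 * n / 7) :
    ∃ (V : Type) (_ : Fintype V) (G : SimpleGraph V),
      G.IsTree ∧ Fintype.card V = n ∧ G.gammaStR = p := by
  obtain ⟨A, B, t, hAB, rfl, rfl⟩ := exists_tree_params hn h1 h2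
  exact ⟨_, inferInstance, StrongRomanTree.tree A B t, StrongRomanTree.isTree_tree,
    StrongRomanTree.card_vertex, StrongRomanTree.gammaStR_tree hAB⟩
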